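/- arXiv:2109.13314 — 4 statements merged into one kernel-verified Lean document; each statement's English description precedes it below -/
import Mathlib

section
/- In the group algebra of the symmetric group S_{n+1} over the integers, the sum of all group elements equals the product w_{1,1} w_{1,2} ⋯ w_{1,n}, where w_{1,j} := 1 + s_{j,j} + s_{j-1,j} + ⋯ + s_{1,j}, with s_{i,j} := r_j r_{j-1} ⋯ r_i and r_k the adjacent transposition swapping k and k+1. -/
/-- The adjacent transposition `r_k` swapping letters `k` and `k+1` (1-indexed),
i.e. the 0-indexed positions `k-1` and `k` of `Fin (n+1)`. -/
def adjSwap (n k : ℕ) : Equiv.Perm (Fin (n + 1)) :=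
  Equiv.swap (Fin.ofNat (n + 1) (k - 1 : ℕ)) (Fin.ofNat (n + 1) (k : ℕ))

/-- `s_{i,j} := r_j r_{j-1} ⋯ r_i` (with `r_i` acting first). -/
def sPerm (n i j : ℕ) : Equiv.Perm (Fin (n + 1)) :=
  ((List.range' i (j + 1 - i)).map (adjSwap n)).foldl (fun g h => h * g) 1

/-- `w_{i,j} := 1 + Σ_{k=i}^{j} s_{k,j}` in the group algebra `ℤ[S_{n+1}]`. -/
noncomputable def wElt (n i j : ℕ) : MonoidAlgebra ℤ (Equiv.Perm (Fin (n + 1))) :=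
  1 + ∑ k ∈ Finset.Icc i j, MonoidAlgebra.of ℤ (Equiv.Perm (Fin (n + 1))) (sPerm n k j)

/-!
Let `S_m = permsBelow n m ⊆ S_{n+1}` be the permutations fixing every letter `x ≥ m`
(letters 0-indexed). For `i ≤ m`, `s_{i+1,m}` fixes every letter above `m` and sends `i` to `m`, so every
`h ∈ S_{m+1}` factors uniquely as `g * s_{i+1,m}` with `g ∈ S_m`, namely with `i = h⁻¹ m`.
In the group algebra this says `Σ S_{m+1} = (Σ S_m) * w_{1,m}`, and induction from
`S_0 = {1}` gives the product formula.
-/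

open Equiv Finset Fin.NatCast

theorem MonoidAlgebra.sum_of_eq_mul_of_bijOn {R G ι : Type*} [Semiring R] [Monoid G]
    {H K : Finset G} {I : Finset ι} {t : ι → G}
    (hbij : Set.BijOn (fun p : G × ι => p.1 * t p.2) ↑(H ×ˢ I) ↑K) :
    ∑ g ∈ K, of R G g = (∑ g ∈ H, of R G g) * ∑ i ∈ I, of R G (t i) := by
  rw [sum_mul_sum, ← sum_product']
  exact (sum_nbij _ (fun _ hp => hbij.mapsTo hp) hbij.injOn hbij.surjOn
    fun p _ => (map_mul _ p.1 (t p.2)).symm).symm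

lemma sPerm_eq_one {n i j : ℕ} (h : j < i) : sPerm n i j = 1 := by
  simp [sPerm, Nat.sub_eq_zero_of_le h]

lemma sPerm_succ {n i j : ℕ} (h : i ≤ j + 1) :
    sPerm n i (j + 1) = adjSwap n (j + 1) * sPerm n i j := by
  have hlen : j + 1 + 1 - i = j + 1 - i + 1 := by omega
  have hend : i + (j + 1 - i) = j + 1 := by omega
  simp [sPerm, hlen, List.range'_concat, hend]

lemma adjSwap_succ (n k : ℕ) : adjSwap n (k + 1) = swap (k : Fin (n + 1)) (k + 1 : ℕ) := by
  simp only [adjSwap, Nat.add_sub_cancel, Fin.ofNat_eq_cast]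

lemma sPerm_apply_of_lt {n i m : ℕ} {x : Fin (n + 1)} (hx : m < x) : sPerm n (i + 1) m x = x := by
  induction m with
  | zero => rw [sPerm_eq_one (Nat.succ_pos i), Perm.one_apply]
  | succ m ih =>
    rcases lt_or_ge m i with hmi | him
    · rw [sPerm_eq_one (by omega), Perm.one_apply]
    · have hxn := x.isLt
      rw [sPerm_succ (by omega), Perm.mul_apply, ih (by omega), adjSwap_succ]
      apply swap_apply_of_ne_of_ne <;> rw [ne_eq, Fin.ext_iff, Fin.val_cast_of_lt] <;> omega

lemma sPerm_apply_self {n i m : ℕ} (him : i ≤ m) (hm : m ≤ n) :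
    sPerm n (i + 1) m i = (m : Fin (n + 1)) := by
  induction m, him using Nat.le_induction with
  | base => rw [sPerm_eq_one (Nat.lt_succ_self i), Perm.one_apply]
  | succ m him ih =>
    rw [sPerm_succ (by omega), Perm.mul_apply, ih (by omega), adjSwap_succ, swap_apply_left]

def permsBelow (n m : ℕ) : Finset (Perm (Fin (n + 1))) :=
  {g | ∀ x : Fin (n + 1), m ≤ x → g x = x}

section permsBelow

variable {n m : ℕ}

@[simp]
lemma mem_permsBelow {g : Perm (Fin (n + 1))} :
    g ∈ permsBelow n m ↔ ∀ x : Fin (n + 1), m ≤ x → g x = x := by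
  simp [permsBelow]

lemma permsBelow_zero : permsBelow n 0 = {1} := by
  ext g
  simp [Perm.ext_iff]

lemma permsBelow_eq_univ : permsBelow n (n + 1) = univ := by
  ext g
  simp only [mem_permsBelow, mem_univ, iff_true]
  exact fun x hx => absurd x.isLt (by omega)

lemma inv_apply_lt_of_mem_permsBelow {h : Perm (Fin (n + 1))} (hh : h ∈ permsBelow n m)
    {y : Fin (n + 1)} (hy : (y : ℕ) < m) : (h⁻¹ y : ℕ) < m := by
  by_contra! hle
  have hfix := mem_permsBelow.mp hh _ hle
  rw [show h (h⁻¹ y) = y by simp] at hfix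
  rw [← hfix] at hle
  omega

lemma mul_sPerm_apply_self {g : Perm (Fin (n + 1))} (hg : g ∈ permsBelow n m) {i : ℕ}
    (him : i ≤ m) (hm : m ≤ n) : (g * sPerm n (i + 1) m) i = m := by
  rw [Perm.mul_apply, sPerm_apply_self him hm]
  exact mem_permsBelow.mp hg _ (by rw [Fin.val_cast_of_lt (by omega)])

lemma bijOn_mul_sPerm (hm : m ≤ n) :
    Set.BijOn (fun p : Perm (Fin (n + 1)) × ℕ => p.1 * sPerm n (p.2 + 1) m)
      ↑(permsBelow n m ×ˢ range (m + 1)) ↑(permsBelow n (m + 1)) := by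
  refine ⟨?mapsTo, ?injOn, ?surjOn⟩
  case mapsTo =>
    rintro ⟨g, i⟩ hp
    simp only [coe_product, Set.mem_prod, mem_coe, mem_permsBelow] at hp ⊢
    intro x hx
    rw [Perm.mul_apply, sPerm_apply_of_lt hx, hp.1 x (by omega)]
  case injOn =>
    rintro ⟨g, i⟩ hp ⟨g', i'⟩ hp' heq
    simp only [coe_product, Set.mem_prod, mem_coe, mem_range] at hp hp' heq
    have hcast : (i : Fin (n + 1)) = i' := (g * sPerm n (i + 1) m).injective <| by
      rw [mul_sPerm_apply_self hp.1 (by omega) hm, heq,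
        mul_sPerm_apply_self hp'.1 (by omega) hm]
    have hi : i = i' := by
      simpa [Fin.val_cast_of_lt (show i < n + 1 by omega),
        Fin.val_cast_of_lt (show i' < n + 1 by omega)] using congrArg Fin.val hcast
    subst hi
    exact Prod.ext (mul_right_cancel heq) rfl
  case surjOn =>
    intro h hh
    set y := h⁻¹ m with hy_def
    have hym : (y : ℕ) ≤ m := Nat.lt_succ_iff.mp <|
      inv_apply_lt_of_mem_permsBelow hh (by rw [Fin.val_cast_of_lt (by omega)]; omega)
    have hsy : (sPerm n (y + 1) m)⁻¹ m = y := by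
      rw [Perm.inv_eq_iff_eq, ← sPerm_apply_self hym hm, Fin.cast_val_eq_self]
    refine ⟨(h * (sPerm n (y + 1) m)⁻¹, y), ?_, by simp⟩
    simp only [coe_product, Set.mem_prod, mem_coe, mem_permsBelow, mem_range] at hh ⊢
    refine ⟨fun x hx => ?_, by omega⟩
    rcases hx.eq_or_lt with hxm | hxm
    · have hx : x = m := Fin.ext (by rw [Fin.val_cast_of_lt (by omega), hxm])
      rw [hx, Perm.mul_apply, hsy, hy_def, Perm.coe_inv, apply_symm_apply]
    · rw [Perm.mul_apply, Perm.inv_eq_iff_eq.mpr (sPerm_apply_of_lt hxm).symm, hh x hxm]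

end permsBelow

open MonoidAlgebra

lemma wElt_one_eq_sum_range (n m : ℕ) :
    wElt n 1 m = ∑ i ∈ range (m + 1), of ℤ (Perm (Fin (n + 1))) (sPerm n (i + 1) m) := by
  rw [sum_range_succ, sPerm_eq_one (Nat.lt_succ_self m), map_one, wElt, add_comm 1,
    ← Ico_add_one_right_eq_Icc, sum_Ico_eq_sum_range, Nat.add_sub_cancel]
  simp only [add_comm 1]

lemma sum_permsBelow_succ {n m : ℕ} (hm : m ≤ n) :
    ∑ g ∈ permsBelow n (m + 1), of ℤ (Perm (Fin (n + 1))) g =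
      (∑ g ∈ permsBelow n m, of ℤ (Perm (Fin (n + 1))) g) * wElt n 1 m := by
  rw [wElt_one_eq_sum_range]
  exact sum_of_eq_mul_of_bijOn (t := fun i => sPerm n (i + 1) m) (bijOn_mul_sPerm hm)

lemma sum_permsBelow_eq_prod_wElt {n m : ℕ} (hm : m ≤ n) :
    ∑ g ∈ permsBelow n (m + 1), of ℤ (Perm (Fin (n + 1))) g =
      ((List.range' 1 m).map (wElt n 1)).prod := by
  induction m with
  | zero =>
    rw [sum_permsBelow_succ hm, permsBelow_zero, sum_singleton, map_one, one_mul]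
    simp [wElt]
  | succ m ih =>
    rw [sum_permsBelow_succ hm, ih (by omega), List.range'_concat, List.map_append,
      List.prod_append]
    simp [add_comm 1]

theorem sum_perm_eq_prod_wElt_general (n : ℕ) :
    (∑ g : Equiv.Perm (Fin (n + 1)),
        MonoidAlgebra.of ℤ (Equiv.Perm (Fin (n + 1))) g) =
      ((List.range' 1 n).map (fun j => wElt n 1 j)).prod := by
  rw [← permsBelow_eq_univ, sum_permsBelow_eq_prod_wElt le_rfl]

/-- In the group algebra `ℤ[S_{n+1}]`, the sum of all group elements equals the
product `w_{1,1} w_{1,2} ⋯ w_{1,n}`. -/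
theorem sum_perm_eq_prod_wElt (n : ℕ) (hn : 1 ≤ n) :
    (∑ g : Equiv.Perm (Fin (n + 1)),
        MonoidAlgebra.of ℤ (Equiv.Perm (Fin (n + 1))) g) =
      ((List.range' 1 n).map (fun j => wElt n 1 j)).prod :=
  sum_perm_eq_prod_wElt_general n
end

section
/- For A_n and 1 ≤ i ≤ j ≤ n, the generalized Demazure operator D_{i,j} := Σ_{k=i}^{j-1} (r_j r_{j-1} ⋯ r_{k+1}) d_k + d_j + 1 equals s_{i,j} G_i + Σ_{k=i+1}^{j} s_{k,j} G_{k-1} G_k G_{k-1,k}^{-1} + G_j, where s_{k,j} := r_j r_{j-1} ⋯ r_k, d_k := D_k - 1 is the modified Demazure operator, G_k multiplication by (1 - e^{-α_k})^{-1}, and G_{k-1,k} multiplication by (1 - e^{-α_{k-1} - α_k})^{-1}. -/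
/-- The Demazure operator `D(f) = (f - a * r(f)) / (1 - a)`, `a = e^{-α_k}`. -/
noncomputable def demOp {K : Type*} [Field K] (a : K) (r : K → K) (f : K) : K :=
  (f - a * r f) / (1 - a)

/-- The modified Demazure operator `d_k := D_k - 1`. -/
noncomputable def modDemOp {K : Type*} [Field K] (a : K) (r : K → K) (f : K) : K :=
  demOp a r f - f

/-- `s_{i,j} := r_j r_{j-1} ⋯ r_i` as an operator (rightmost factor `r_i`
acting first); `seqComp R i j = R j ∘ R (j-1) ∘ ⋯ ∘ R i`. -/
def seqComp {K : Type*} (R : ℕ → K → K) (i j : ℕ) : K → K :=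
  ((List.range' i (j + 1 - i)).map R).foldl (fun g h => h ∘ g) id

/-- The generalized Demazure operator
`D_{i,j} := Σ_{k=i}^{j-1} (r_j ⋯ r_{k+1}) d_k + d_j + 1`. -/
noncomputable def genDemOp {K : Type*} [Field K]
    (A : ℕ → K) (R : ℕ → K → K) (i j : ℕ) (f : K) : K :=
  (∑ k ∈ Finset.Ico i j, seqComp R (k + 1) j (modDemOp (A k) (R k) f)) +
    modDemOp (A j) (R j) f + f

/-!
Write `G_k f = (1 - e^{-α_k})⁻¹ f`. Since `r_k e^{-α_k} = e^{α_k}` and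
`-e^{-α}/(1 - e^{-α}) = 1/(1 - e^{α})`, the modified Demazure operator is
`d_k f = G_k f - f + r_k (G_k f)`; and `G_{k-1} G_k G_{k-1,k}⁻¹ = G_{k-1} + G_k - 1`
because `1 - ab = (1 - a) + (1 - b) - (1 - a)(1 - b)`. Substituting both and using
`s_{k+1,j} r_k = s_{k,j}`, the two sides become the same sums once the index of
`Σ_k s_{k+1,j} (G_k f - f)` is shifted by one.
-/

open Finset

section seqComp

variable {M : Type*} (R : ℕ → M → M)

theorem seqComp_of_lt {i j : ℕ} (h : j < i) : seqComp R i j = id := by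
  rw [seqComp, Nat.sub_eq_zero_of_le h]
  rfl

theorem seqComp_of_le {i j : ℕ} (h : i ≤ j) : seqComp R i j = seqComp R (i + 1) j ∘ R i := by
  have foldl_comp : ∀ (l : List (M → M)) (g : M → M),
      l.foldl (fun g h => h ∘ g) g = l.foldl (fun g h => h ∘ g) id ∘ g := by
    intro l
    induction l with
    | nil => exact fun _ => rfl
    | cons a l ih => exact fun g => by simp only [List.foldl_cons, ih (a ∘ g), ih (a ∘ id)]; rfl
  rw [seqComp, seqComp, show j + 1 - i = j + 1 - (i + 1) + 1 by omega, List.range'_succ,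
    List.map_cons, List.foldl_cons, foldl_comp]
  rfl

theorem seqComp_self (j : ℕ) : seqComp R j j = R j := by
  rw [seqComp_of_le R le_rfl, seqComp_of_lt R (Nat.lt_succ_self j)]
  rfl

theorem seqComp_add [Add M] (hR : ∀ k x y, R k (x + y) = R k x + R k y) (i j : ℕ) (x y : M) :
    seqComp R i j (x + y) = seqComp R i j x + seqComp R i j y := by
  induction hm : j + 1 - i generalizing i x y with
  | zero => simp [seqComp_of_lt R (show j < i by omega)]
  | succ m ih =>
    rw [seqComp_of_le R (show i ≤ j by omega), Function.comp_apply, hR, ih (i + 1) _ _ (by omega)]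
    rfl

end seqComp

theorem ne_zero_of_forall_sum_smul_eq_zero {ι P : Type*} [DecidableEq ι] [AddCommGroup P]
    {s : Finset ι} {α : ι → P} (hli : ∀ c : ι → ℤ, ∑ k ∈ s, c k • α k = 0 → ∀ k ∈ s, c k = 0)
    {k : ι} (hk : k ∈ s) : α k ≠ 0 := by
  intro h0
  have := hli (fun m => if m = k then 1 else 0) (by simp [ite_smul, h0]) k hk
  simp at this

theorem modDemOp_eq_of_mul_map_eq_one {K F : Type*} [Field K] [FunLike F K K] [RingHomClass F K K] (r : F)
    {a : K} (ha : a ≠ 1) (hra : a * r a = 1) (f : K) :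
    modDemOp a r f = (1 - a)⁻¹ * f - f + r ((1 - a)⁻¹ * f) := by
  have hra' : r a ≠ 1 := fun h => ha (by simpa [h] using hra)
  have ha' : 1 - a ≠ 0 := sub_ne_zero.2 ha.symm
  have hb' : 1 - r a ≠ 0 := sub_ne_zero.2 hra'.symm
  rw [modDemOp, demOp, map_mul, map_inv₀, map_sub, map_one]
  field_simp
  linear_combination (r f) * hra

theorem inv_one_sub_mul_inv_one_sub_mul_one_sub_mul {K : Type*} [Field K] {a b : K}
    (ha : a ≠ 1) (hb : b ≠ 1) (f : K) :
    (1 - a)⁻¹ * ((1 - b)⁻¹ * ((1 - a * b) * f)) = (1 - a)⁻¹ * f + (1 - b)⁻¹ * f - f := by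
  have ha' : 1 - a ≠ 0 := sub_ne_zero.2 ha.symm
  have hb' : 1 - b ≠ 0 := sub_ne_zero.2 hb.symm
  field_simp
  ring

theorem genDemOp_eq_of_modDemOp_eq {K : Type*} [Field K] {A : ℕ → K} {R : ℕ → K → K}
    (hR : ∀ k x y, R k (x + y) = R k x + R k y) {i j : ℕ} (hij : i ≤ j) (g : ℕ → K) (f : K)
    (hmod : ∀ k, i ≤ k → k ≤ j → modDemOp (A k) (R k) f = g k - f + R k (g k)) :
    genDemOp A R i j f =
      seqComp R i j (g i) + ∑ k ∈ Icc (i + 1) j, seqComp R k j (g (k - 1) + g k - f) + g j := by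
  have hleft : ∀ k ∈ Ico i j, seqComp R (k + 1) j (modDemOp (A k) (R k) f) =
      seqComp R (k + 1) j (g k - f) + seqComp R k j (g k) := by
    intro k hk
    obtain ⟨hik, hkj⟩ := mem_Ico.1 hk
    rw [hmod k hik hkj.le, seqComp_add R hR, seqComp_of_le R hkj.le, Function.comp_apply]
  have hright : ∀ k ∈ Icc (i + 1) j, seqComp R k j (g (k - 1) + g k - f) =
      seqComp R k j (g (k - 1) - f) + seqComp R k j (g k) := by
    intro k _
    rw [add_sub_right_comm, seqComp_add R hR]
  have hshift : ∑ k ∈ Ico i j, seqComp R (k + 1) j (g k - f) =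
      ∑ k ∈ Icc (i + 1) j, seqComp R k j (g (k - 1) - f) := by
    rw [← Ico_add_one_right_eq_Icc, ← sum_Ico_add' (fun k => seqComp R k j (g (k - 1) - f))]
    rfl
  have hsplit : ∑ k ∈ Ico i j, seqComp R k j (g k) + seqComp R j j (g j) =
      seqComp R i j (g i) + ∑ k ∈ Icc (i + 1) j, seqComp R k j (g k) := by
    rw [← sum_Ico_succ_top hij, sum_eq_sum_Ico_succ_bot (by omega : i < j + 1),
      Ico_add_one_right_eq_Icc]
  rw [genDemOp, sum_congr rfl hleft, sum_congr rfl hright, sum_add_distrib, sum_add_distrib,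
    hmod j hij le_rfl, ← seqComp_self R, hshift]
  linear_combination hsplit

theorem genDemOp_eq_general {P K : Type*} [AddCommGroup P] [Field K]
    (n : ℕ)
    (e : P → K) (he0 : e 0 = 1) (hadd : ∀ μ ν : P, e (μ + ν) = e μ * e ν)
    (hne : ∀ μ : P, μ ≠ 0 → e μ ≠ 1)
    (α : ℕ → P) (ρ : ℕ → P →+ P)
    (hli : ∀ c : ℕ → ℤ, (∑ k ∈ Finset.Icc 1 n, c k • α k) = 0 →
      ∀ k ∈ Finset.Icc 1 n, c k = 0)
    (hρself : ∀ k, 1 ≤ k → k ≤ n → ρ k (α k) = -(α k))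
    (R : ℕ → K ≃+* K) (hR : ∀ k, 1 ≤ k → k ≤ n → ∀ μ : P, R k (e μ) = e (ρ k μ))
    (i j : ℕ) (hi : 1 ≤ i) (hij : i ≤ j) (hj : j ≤ n) (f : K) :
    genDemOp (fun k => e (-α k)) (fun k => ⇑(R k)) i j f =
      seqComp (fun k => ⇑(R k)) i j ((1 - e (-α i))⁻¹ * f) +
        (∑ k ∈ Finset.Icc (i + 1) j,
          seqComp (fun k => ⇑(R k)) k j
            ((1 - e (-α (k - 1)))⁻¹ * ((1 - e (-α k))⁻¹ *
              ((1 - e (-(α (k - 1) + α k))) * f)))) +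
        (1 - e (-α j))⁻¹ * f := by
  have hα : ∀ k, i ≤ k → k ≤ j → e (-α k) ≠ 1 := fun k hik hkj =>
    hne _ <| neg_ne_zero.2 <| ne_zero_of_forall_sum_smul_eq_zero hli <|
      mem_Icc.2 ⟨hi.trans hik, hkj.trans hj⟩
  have hRα : ∀ k, i ≤ k → k ≤ j → e (-α k) * R k (e (-α k)) = 1 := fun k hik hkj => by
    rw [hR k (hi.trans hik) (hkj.trans hj), map_neg, hρself k (hi.trans hik) (hkj.trans hj),
      neg_neg, ← hadd, neg_add_cancel, he0]
  rw [genDemOp_eq_of_modDemOp_eq (fun k => map_add (R k)) hij (fun k => (1 - e (-α k))⁻¹ * f) f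
    fun k hik hkj => modDemOp_eq_of_mul_map_eq_one (R k) (hα k hik hkj) (hRα k hik hkj) f]
  congr 2
  refine sum_congr rfl fun k hk => ?_
  obtain ⟨hik, hkj⟩ := mem_Icc.1 hk
  rw [neg_add, hadd, inv_one_sub_mul_inv_one_sub_mul_one_sub_mul (hα (k - 1) (by omega) (by omega))
    (hα k (by omega) hkj)]

/-- For `A_n` and `1 ≤ i ≤ j ≤ n`, the generalized Demazure operator satisfies
`D_{i,j} = s_{i,j} G_i + Σ_{k=i+1}^{j} s_{k,j} G_{k-1} G_k G_{k-1,k}⁻¹ + G_j`.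
Here `e` is the formal exponential on the weight lattice `P` of `A_n`, with
simple roots `α 1, …, α n` (linearly independent), `ρ k` the simple reflection
on `P`, and `R k` the induced field automorphism. -/
theorem genDemOp_eq {P K : Type*} [AddCommGroup P] [Field K]
    (n : ℕ) (hn : 1 ≤ n)
    (e : P → K) (he0 : e 0 = 1) (hadd : ∀ μ ν : P, e (μ + ν) = e μ * e ν)
    (hne : ∀ μ : P, μ ≠ 0 → e μ ≠ 1)
    (α : ℕ → P) (ρ : ℕ → P →+ P)
    (hli : ∀ c : ℕ → ℤ, (∑ k ∈ Finset.Icc 1 n, c k • α k) = 0 →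
      ∀ k ∈ Finset.Icc 1 n, c k = 0)
    (hρself : ∀ k, 1 ≤ k → k ≤ n → ρ k (α k) = -(α k))
    (hρsucc : ∀ k, 1 ≤ k → k + 1 ≤ n → ρ k (α (k + 1)) = α k + α (k + 1))
    (hρpred : ∀ k, 2 ≤ k → k ≤ n → ρ k (α (k - 1)) = α (k - 1) + α k)
    (hρfar : ∀ k m, 1 ≤ k → k ≤ n → 1 ≤ m → m ≤ n →
      (k + 1 < m ∨ m + 1 < k) → ρ k (α m) = α m)
    (R : ℕ → K ≃+* K) (hR : ∀ k, 1 ≤ k → k ≤ n → ∀ μ : P, R k (e μ) = e (ρ k μ))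
    (i j : ℕ) (hi : 1 ≤ i) (hij : i ≤ j) (hj : j ≤ n) (f : K) :
    genDemOp (fun k => e (-α k)) (fun k => ⇑(R k)) i j f =
      seqComp (fun k => ⇑(R k)) i j ((1 - e (-α i))⁻¹ * f) +
        (∑ k ∈ Finset.Icc (i + 1) j,
          seqComp (fun k => ⇑(R k)) k j
            ((1 - e (-α (k - 1)))⁻¹ * ((1 - e (-α k))⁻¹ *
              ((1 - e (-(α (k - 1) + α k))) * f)))) +
        (1 - e (-α j))⁻¹ * f :=
  genDemOp_eq_general n e he0 hadd hne α ρ hli hρself R hR i j hi hij hj f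
end

section
/- For A_n, the key intermediate identity of the induction: (multiplication by G_1 G_2 ⋯ G_{n-1}) ∘ D_{1,n} = (Σ_{k=1}^{n} s_{k,n} + 1) ∘ (multiplication by G_1 G_2 ⋯ G_n), where s_{k,n} := r_n r_{n-1} ⋯ r_k, D_{1,n} is the generalized Demazure operator Σ_{k=1}^{n-1}(r_n ⋯ r_{k+1}) d_k + d_n + 1, and G_k = (1 - e^{-α_k})^{-1}. -/
section Aux

private lemma foldl_comp_fn {α : Type*} :
    ∀ (l : List (α → α)) (c : α → α),
      l.foldl (fun g h => h ∘ g) c = (l.foldl (fun g h => h ∘ g) id) ∘ c := by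
  intro l
  induction l with
  | nil => intro c; rfl
  | cons a l ih =>
    intro c
    simp only [List.foldl_cons]
    rw [ih (a ∘ c), ih (a ∘ id)]
    rfl

private lemma seqComp_gt {α : Type*} (R : ℕ → α → α) {i j : ℕ} (h : j + 1 ≤ i) :
    seqComp R i j = id := by
  unfold seqComp
  rw [Nat.sub_eq_zero_of_le h]
  rfl

private lemma seqComp_left {α : Type*} (R : ℕ → α → α) {i j : ℕ} (h : i ≤ j) :
    seqComp R i j = seqComp R (i + 1) j ∘ R i := by
  unfold seqComp
  rw [show j + 1 - i = (j - i) + 1 by omega, List.range'_succ,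
    show j + 1 - (i + 1) = j - i by omega]
  simp only [List.map_cons, List.foldl_cons]
  rw [foldl_comp_fn]
  rfl

private noncomputable def seqRE {K : Type*} [Field K] (R : ℕ → K ≃+* K) (i j : ℕ) : K ≃+* K :=
  ((List.range' i (j + 1 - i)).map R).foldl (fun g h => g.trans h) (RingEquiv.refl K)

private lemma coe_foldl_trans {K : Type*} [Field K] :
    ∀ (l : List (K ≃+* K)) (c : K ≃+* K),
      ⇑(l.foldl (fun g h => g.trans h) c) =
        (l.map (fun r : K ≃+* K => (r : K → K))).foldl (fun g h => h ∘ g) ⇑c := by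
  intro l
  induction l with
  | nil => intro c; rfl
  | cons a l ih =>
    intro c
    simp only [List.foldl_cons, List.map_cons]
    rw [ih]
    rfl

private lemma seqComp_eq_seqRE {K : Type*} [Field K] (R : ℕ → K ≃+* K) (i j : ℕ) :
    seqComp (fun k => ⇑(R k)) i j = ⇑(seqRE R i j) := by
  unfold seqComp seqRE
  rw [coe_foldl_trans, List.map_map]
  rfl

private def seqAH {P : Type*} [AddCommGroup P] (ρ : ℕ → P →+ P) (i j : ℕ) : P →+ P :=
  ((List.range' i (j + 1 - i)).map ρ).foldl (fun g h => h.comp g) (AddMonoidHom.id P)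

private lemma coe_foldl_comp {P : Type*} [AddCommGroup P] :
    ∀ (l : List (P →+ P)) (c : P →+ P),
      ⇑(l.foldl (fun g h => h.comp g) c) =
        (l.map (fun r : P →+ P => (r : P → P))).foldl (fun g h => h ∘ g) ⇑c := by
  intro l
  induction l with
  | nil => intro c; rfl
  | cons a l ih =>
    intro c
    simp only [List.foldl_cons, List.map_cons]
    rw [ih]
    rfl

private lemma seqComp_eq_seqAH {P : Type*} [AddCommGroup P] (ρ : ℕ → P →+ P) (i j : ℕ) :
    seqComp (fun k => ⇑(ρ k)) i j = ⇑(seqAH ρ i j) := by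
  unfold seqComp seqAH
  rw [coe_foldl_comp, List.map_map]
  rfl

private lemma seqRE_gt {K : Type*} [Field K] (R : ℕ → K ≃+* K) {i j : ℕ} (h : j + 1 ≤ i)
    (x : K) : seqRE R i j x = x := by
  have := (seqComp_eq_seqRE R i j).symm.trans (seqComp_gt _ h)
  exact congrFun this x

private lemma seqRE_peel {K : Type*} [Field K] (R : ℕ → K ≃+* K) {i j : ℕ} (h : i ≤ j)
    (x : K) : seqRE R i j x = seqRE R (i + 1) j (R i x) := by
  have := (seqComp_eq_seqRE R i j).symm.trans
    ((seqComp_left (fun k => ⇑(R k)) h).trans (by rw [seqComp_eq_seqRE]))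
  exact congrFun this x

private lemma seqAH_gt {P : Type*} [AddCommGroup P] (ρ : ℕ → P →+ P) {i j : ℕ}
    (h : j + 1 ≤ i) (x : P) : seqAH ρ i j x = x := by
  have := (seqComp_eq_seqAH ρ i j).symm.trans (seqComp_gt _ h)
  exact congrFun this x

private lemma seqAH_peel {P : Type*} [AddCommGroup P] (ρ : ℕ → P →+ P) {i j : ℕ}
    (h : i ≤ j) (x : P) : seqAH ρ i j x = seqAH ρ (i + 1) j (ρ i x) := by
  have := (seqComp_eq_seqAH ρ i j).symm.trans
    ((seqComp_left (fun k => ⇑(ρ k)) h).trans (by rw [seqComp_eq_seqAH]))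
  exact congrFun this x


private lemma seqRE_e {P K : Type*} [AddCommGroup P] [Field K] (n : ℕ)
    (e : P → K) (ρ : ℕ → P →+ P) (R : ℕ → K ≃+* K)
    (hR : ∀ k, 1 ≤ k → k ≤ n → ∀ μ : P, R k (e μ) = e (ρ k μ)) :
    ∀ d i, 1 ≤ i → n + 1 ≤ i + d → ∀ μ : P, seqRE R i n (e μ) = e (seqAH ρ i n μ) := by
  intro d
  induction d with
  | zero =>
    intro i hi hni μ
    rw [seqRE_gt _ (by omega), seqAH_gt _ (by omega)]
  | succ d ih =>
    intro i hi hni μ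
    by_cases hin : n + 1 ≤ i
    · rw [seqRE_gt _ hin, seqAH_gt _ hin]
    · rw [seqRE_peel _ (by omega), seqAH_peel _ (by omega), hR i hi (by omega),
        ih (i + 1) (by omega) (by omega)]

private lemma sig {P : Type*} [AddCommGroup P] (n : ℕ) (α : ℕ → P) (ρ : ℕ → P →+ P)
    (hρself : ∀ k, 1 ≤ k → k ≤ n → ρ k (α k) = -(α k))
    (hρsucc : ∀ k, 1 ≤ k → k + 1 ≤ n → ρ k (α (k + 1)) = α k + α (k + 1))
    (hρpred : ∀ k, 2 ≤ k → k ≤ n → ρ k (α (k - 1)) = α (k - 1) + α k)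
    (hρfar : ∀ k m, 1 ≤ k → k ≤ n → 1 ≤ m → m ≤ n →
      (k + 1 < m ∨ m + 1 < k) → ρ k (α m) = α m) :
    ∀ d j, 1 ≤ j → n + 1 ≤ j + d → ∀ m, 1 ≤ m → m ≤ n →
      seqAH ρ j n (α m) =
        if m + 2 ≤ j then α m
        else if m + 1 = j then ∑ i ∈ Finset.Icc m n, α i
          else if m = j then -(∑ i ∈ Finset.Icc j n, α i)
            else α (m - 1) := by
  have hins : ∀ m, m ≤ n → Finset.Icc m n = insert m (Finset.Icc (m + 1) n) := by
    intro m hm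
    ext x
    simp only [Finset.mem_Icc, Finset.mem_insert]
    omega
  have base : ∀ j, n + 1 ≤ j → ∀ m, 1 ≤ m → m ≤ n →
      seqAH ρ j n (α m) =
        if m + 2 ≤ j then α m
        else if m + 1 = j then ∑ i ∈ Finset.Icc m n, α i
          else if m = j then -(∑ i ∈ Finset.Icc j n, α i)
            else α (m - 1) := by
    intro j hj m hm1 hmn
    rw [seqAH_gt ρ (by omega)]
    by_cases h1 : m + 2 ≤ j
    · rw [if_pos h1]
    · have hm : m = n := by omega
      rw [if_neg h1, if_pos (show m + 1 = j by omega)]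
      subst hm
      rw [Finset.Icc_self, Finset.sum_singleton]
  intro d
  induction d with
  | zero => intro j hj1 hj2; exact base j (by omega)
  | succ d ih =>
    intro j hj1 hj2 m hm1 hmn
    by_cases hjn : n + 1 ≤ j
    · exact base j hjn m hm1 hmn
    · have hjn' : j ≤ n := by omega
      rw [seqAH_peel ρ (by omega)]
      by_cases h1 : m + 2 ≤ j
      · rw [hρfar j m hj1 hjn' hm1 hmn (Or.inr (by omega)),
          ih (j + 1) (by omega) (by omega) m hm1 hmn,
          if_pos (show m + 2 ≤ j + 1 by omega), if_pos h1]
      · by_cases h2 : m + 1 = j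
        · have hrj : ρ j (α m) = α m + α j := by
            have h := hρpred j (by omega) hjn'
            rw [show j - 1 = m by omega] at h
            exact h
          rw [hrj, map_add, ih (j + 1) (by omega) (by omega) m hm1 hmn,
            ih (j + 1) (by omega) (by omega) j hj1 hjn',
            if_pos (show m + 2 ≤ j + 1 by omega),
            if_neg (show ¬(j + 2 ≤ j + 1) by omega), if_pos rfl,
            if_neg h1, if_pos h2]
          rw [hins m hmn, Finset.sum_insert (by simp only [Finset.mem_Icc]; omega),
            show m + 1 = j from h2]
        · by_cases h3 : m = j
          · subst h3
            rw [hρself m hm1 hjn', map_neg,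
              ih (m + 1) (by omega) (by omega) m hm1 hmn,
              if_neg (by omega), if_pos rfl, if_neg h1, if_neg h2, if_pos rfl]
          · by_cases h4 : m = j + 1
            · subst h4
              rw [hρsucc j hj1 (by omega), map_add,
                ih (j + 1) (by omega) (by omega) j hj1 hjn',
                ih (j + 1) (by omega) (by omega) (j + 1) (by omega) hmn,
                if_neg (by omega), if_pos rfl,
                if_neg (by omega), if_neg (by omega), if_pos rfl,
                if_neg h1, if_neg h2, if_neg h3]
              rw [hins j hjn', Finset.sum_insert (by simp only [Finset.mem_Icc]; omega)]
              simp
            · rw [hρfar j m hj1 hjn' hm1 hmn (Or.inl (by omega)),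
                ih (j + 1) (by omega) (by omega) m hm1 hmn,
                if_neg (by omega), if_neg (by omega), if_neg (by omega),
                if_neg h1, if_neg h2, if_neg h3]

@[to_additive]
private lemma prod_Icc_split {M : Type*} [CommMonoid M] (g : ℕ → M) {a t b : ℕ}
    (h1 : a ≤ t + 1) (h2 : t ≤ b) :
    ∏ m ∈ Finset.Icc a b, g m =
      (∏ m ∈ Finset.Icc a t, g m) * ∏ m ∈ Finset.Icc (t + 1) b, g m := by
  rw [← Finset.prod_union (by
    simp only [Finset.disjoint_left, Finset.mem_Icc]
    omega)]
  apply Finset.prod_congr _ (fun _ _ => rfl)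
  ext x
  simp only [Finset.mem_Icc, Finset.mem_union]
  omega

@[to_additive]
private lemma prod_shift {M : Type*} [CommMonoid M] (g : ℕ → M) (a b : ℕ)
    (h1 : 1 ≤ a) (h2 : 1 ≤ b) :
    ∏ m ∈ Finset.Icc a b, g (m - 1) = ∏ m ∈ Finset.Icc (a - 1) (b - 1), g m := by
  refine Finset.prod_nbij' (fun m => m - 1) (fun m => m + 1) ?_ ?_ ?_ ?_ ?_ <;>
      intro m hm <;> simp only [Finset.mem_Icc] at hm ⊢ <;> omega

@[to_additive]
private lemma prod_shift' {M : Type*} [CommMonoid M] (g : ℕ → M) (a b : ℕ) :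
    ∏ m ∈ Finset.Icc a b, g (m + 1) = ∏ m ∈ Finset.Icc (a + 1) (b + 1), g m := by
  refine Finset.prod_nbij' (fun m => m + 1) (fun m => m - 1) ?_ ?_ ?_ ?_ ?_ <;>
      intro m hm <;> simp only [Finset.mem_Icc] at hm ⊢ <;> omega


/-- The key intermediate identity of the induction for `A_n`:
`(G_1 G_2 ⋯ G_{n-1}) D_{1,n} = (Σ_{k=1}^{n} s_{k,n} + 1)(G_1 G_2 ⋯ G_n)`,
where `s_{k,n} = r_n r_{n-1} ⋯ r_k` and `G_k` is multiplication by
`(1 - e^{-α_k})⁻¹`. -/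
theorem key_intermediate_identity_An {P K : Type*} [AddCommGroup P] [Field K]
    (n : ℕ) (hn : 1 ≤ n)
    (e : P → K) (he0 : e 0 = 1) (hadd : ∀ μ ν : P, e (μ + ν) = e μ * e ν)
    (hne : ∀ μ : P, μ ≠ 0 → e μ ≠ 1)
    (α : ℕ → P) (ρ : ℕ → P →+ P)
    (hli : ∀ c : ℕ → ℤ, (∑ k ∈ Finset.Icc 1 n, c k • α k) = 0 →
      ∀ k ∈ Finset.Icc 1 n, c k = 0)
    (hρself : ∀ k, 1 ≤ k → k ≤ n → ρ k (α k) = -(α k))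
    (hρsucc : ∀ k, 1 ≤ k → k + 1 ≤ n → ρ k (α (k + 1)) = α k + α (k + 1))
    (hρpred : ∀ k, 2 ≤ k → k ≤ n → ρ k (α (k - 1)) = α (k - 1) + α k)
    (hρfar : ∀ k m, 1 ≤ k → k ≤ n → 1 ≤ m → m ≤ n →
      (k + 1 < m ∨ m + 1 < k) → ρ k (α m) = α m)
    (R : ℕ → K ≃+* K) (hR : ∀ k, 1 ≤ k → k ≤ n → ∀ μ : P, R k (e μ) = e (ρ k μ))
    (f : K) :
    (∏ k ∈ Finset.Icc 1 (n - 1), (1 - e (-α k))⁻¹) *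
        genDemOp (fun k => e (-α k)) (fun k => ⇑(R k)) 1 n f =
      (∑ k ∈ Finset.Icc 1 n,
          seqComp (fun k => ⇑(R k)) k n
            ((∏ m ∈ Finset.Icc 1 n, (1 - e (-α m))⁻¹) * f)) +
        (∏ m ∈ Finset.Icc 1 n, (1 - e (-α m))⁻¹) * f := by
  -- basic facts about e
  have hmul1 : ∀ μ : P, e μ * e (-μ) = 1 := by
    intro μ; rw [← hadd]; simp [he0]
  have he_ne : ∀ μ : P, e μ ≠ 0 := by
    intro μ h
    have h1 := hmul1 μ
    rw [h, zero_mul] at h1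
    exact zero_ne_one h1
  have he_inv : ∀ μ : P, e μ = (e (-μ))⁻¹ := by
    intro μ
    refine eq_inv_of_mul_eq_one_left ?_
    rw [← hadd]; simp [he0]
  have hαne : ∀ m, 1 ≤ m → m ≤ n → (1 : K) - e (-α m) ≠ 0 := by
    intro m h1 h2 h
    have hα0 : α m ≠ 0 := by
      intro h0
      have key := hli (fun k => if k = m then 1 else 0) ?_ m
        (by simp only [Finset.mem_Icc]; omega)
      · simp at key
      · rw [Finset.sum_eq_single m (fun b _ hb => by simp [hb])
          (fun hmem => absurd (by simp only [Finset.mem_Icc]; omega) hmem)]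
        simp [h0]
    exact hne (-α m) (neg_ne_zero.mpr hα0) (sub_eq_zero.mp h).symm
  have hβne : ∀ j, 1 ≤ j → j ≤ n →
      (1 : K) - e (-(∑ i ∈ Finset.Icc j n, α i)) ≠ 0 := by
    intro j h1 h2 h
    have hβ0 : (∑ i ∈ Finset.Icc j n, α i) ≠ 0 := by
      intro h0
      have key := hli (fun k => if j ≤ k then 1 else 0) ?_ j
        (by simp only [Finset.mem_Icc]; omega)
      · simp at key
      · rw [Finset.sum_congr rfl (g := fun k => if j ≤ k then α k else 0)
          (fun k _ => by by_cases hjk : j ≤ k <;> simp [hjk]),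
          ← Finset.sum_filter,
          show (Finset.Icc 1 n).filter (fun k => j ≤ k) = Finset.Icc j n by
            ext x; simp only [Finset.mem_filter, Finset.mem_Icc]; omega]
        exact h0
    exact hne _ (neg_ne_zero.mpr hβ0) (sub_eq_zero.mp h).symm
  -- abbreviation
  set B : ℕ → K := fun j => e (-(∑ i ∈ Finset.Icc j n, α i)) with hBdef
  have hBne0 : ∀ j, B j ≠ 0 := fun j => he_ne _
  have hBne1 : ∀ j, 1 ≤ j → j ≤ n → (1 : K) - B j ≠ 0 := fun j h1 h2 => hβne j h1 h2
  have hBn : e (-α n) = B n := by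
    rw [hBdef]
    simp only [Finset.Icc_self, Finset.sum_singleton]
  have hBrec : ∀ j, 2 ≤ j → j ≤ n → B (j - 1) = e (-α (j - 1)) * B j := by
    intro j h2 hjn
    rw [hBdef]
    simp only
    rw [← hadd, ← neg_add]
    congr 2
    rw [show Finset.Icc (j - 1) n = insert (j - 1) (Finset.Icc j n) by
        ext x
        simp only [Finset.mem_Icc, Finset.mem_insert]
        omega,
      Finset.sum_insert (by simp only [Finset.mem_Icc]; omega)]
  -- action of s_{j,n} on the e-values
  have hSe : ∀ j m, 1 ≤ j → 1 ≤ m → m ≤ n →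
      seqRE R j n (e (-α m)) =
        if m + 2 ≤ j then e (-α m)
        else if m + 1 = j then B m
          else if m = j then (B j)⁻¹
            else e (-α (m - 1)) := by
    intro j m hj hm1 hm2
    rw [seqRE_e n e ρ R hR (n + 1) j hj (by omega), map_neg,
      sig n α ρ hρself hρsucc hρpred hρfar (n + 1) j hj (by omega) m hm1 hm2]
    split_ifs with h1 h2 h3
    · rfl
    · rfl
    · rw [neg_neg]
      exact he_inv _
    · rfl
  set Gn' : K := ∏ k ∈ Finset.Icc 1 (n - 1), (1 - e (-α k))⁻¹ with hG'def
  set Gn : K := ∏ m ∈ Finset.Icc 1 n, (1 - e (-α m))⁻¹ with hGdef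
  have hBinv : ∀ j, 1 ≤ j → j ≤ n → (1 - (B j)⁻¹)⁻¹ = -(B j) / (1 - B j) := by
    intro j h1 h2
    have h1b := hBne1 j h1 h2
    have hb0 := hBne0 j
    have hinv : (1 : K) - (B j)⁻¹ ≠ 0 := by
      rw [sub_ne_zero]
      intro hh
      exact h1b (by simp [inv_eq_one.mp hh.symm])
    have hm1 : B j - 1 ≠ 0 := fun hh => h1b (by linear_combination -hh)
    have h' : (1 : K) - (B j)⁻¹ = (B j - 1) / B j := by
      field_simp
    rw [h', inv_div, div_eq_div_iff hm1 h1b]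
    ring
  have key0 : Gn = Gn' * (1 - e (-α n))⁻¹ := by
    rw [hGdef, hG'def, prod_Icc_split (fun m => (1 - e (-α m))⁻¹) (a := 1) (t := n - 1)
      (by omega) (by omega), show n - 1 + 1 = n by omega, Finset.Icc_self,
      Finset.prod_singleton]
  have key2G : ∀ j, 2 ≤ j → j ≤ n →
      seqRE R j n Gn = Gn' * (B (j - 1) / (1 - B (j - 1)) - B j / (1 - B j)) := by
    intro j hj2 hjn
    rw [hGdef, map_prod]
    rw [Finset.prod_congr rfl (g := fun m =>
        (1 - if m + 2 ≤ j then e (-α m) else if m + 1 = j then B m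
          else if m = j then (B j)⁻¹ else e (-α (m - 1)))⁻¹)
      (fun m hm => by
        simp only [Finset.mem_Icc] at hm
        rw [map_inv₀, map_sub, map_one, hSe j m (by omega) hm.1 hm.2])]
    rw [prod_Icc_split _ (a := 1) (t := j - 2) (by omega) (by omega),
      show j - 2 + 1 = j - 1 by omega,
      prod_Icc_split _ (a := j - 1) (t := j - 1) (by omega) (by omega),
      show j - 1 + 1 = j by omega,
      prod_Icc_split _ (a := j) (t := j) (by omega) (by omega),
      Finset.Icc_self, Finset.Icc_self, Finset.prod_singleton, Finset.prod_singleton,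
      if_neg (show ¬(j - 1 + 2 ≤ j) by omega), if_pos (show j - 1 + 1 = j by omega),
      if_neg (show ¬(j + 2 ≤ j) by omega), if_neg (show ¬(j + 1 = j) by omega),
      if_pos (rfl : j = j)]
    have hp1 : (∏ m ∈ Finset.Icc 1 (j - 2),
        (1 - if m + 2 ≤ j then e (-α m) else if m + 1 = j then B m
          else if m = j then (B j)⁻¹ else e (-α (m - 1)))⁻¹)
        = ∏ m ∈ Finset.Icc 1 (j - 2), (1 - e (-α m))⁻¹ :=
      Finset.prod_congr rfl (fun m hm => by
        simp only [Finset.mem_Icc] at hm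
        rw [if_pos (by omega)])
    have hp2 : (∏ m ∈ Finset.Icc (j + 1) n,
        (1 - if m + 2 ≤ j then e (-α m) else if m + 1 = j then B m
          else if m = j then (B j)⁻¹ else e (-α (m - 1)))⁻¹)
        = ∏ m ∈ Finset.Icc j (n - 1), (1 - e (-α m))⁻¹ := by
      rw [Finset.prod_congr rfl (fun m hm => by
        simp only [Finset.mem_Icc] at hm
        rw [if_neg (by omega), if_neg (by omega), if_neg (by omega)])]
      have h := prod_shift (fun x => (1 - e (-α x))⁻¹) (j + 1) n (by omega) hn
      simp only [Nat.add_sub_cancel] at h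
      exact h
    rw [hp1, hp2]
    have hG'split : Gn' = (∏ m ∈ Finset.Icc 1 (j - 2), (1 - e (-α m))⁻¹) *
        ((1 - e (-α (j - 1)))⁻¹ * ∏ m ∈ Finset.Icc j (n - 1), (1 - e (-α m))⁻¹) := by
      rw [hG'def, prod_Icc_split _ (a := 1) (t := j - 2) (by omega) (by omega),
        show j - 2 + 1 = j - 1 by omega,
        prod_Icc_split _ (a := j - 1) (t := j - 1) (by omega) (by omega),
        show j - 1 + 1 = j by omega, Finset.Icc_self, Finset.prod_singleton]
    rw [hG'split]
    have hA := hαne (j - 1) (by omega) (by omega)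
    have h1b := hBne1 j (by omega) hjn
    have h1b' := hBne1 (j - 1) (by omega) (by omega)
    have hb0 := hBne0 j
    have hinv : (1 : K) - (B j)⁻¹ ≠ 0 := by
      rw [sub_ne_zero]
      intro hh
      exact h1b (by simp [inv_eq_one.mp hh.symm])
    have scalar : (1 - B (j - 1))⁻¹ * (1 - (B j)⁻¹)⁻¹ =
        (1 - e (-α (j - 1)))⁻¹ * (B (j - 1) / (1 - B (j - 1)) - B j / (1 - B j)) := by
      rw [hBinv j (by omega) hjn]
      rw [hBrec j hj2 hjn] at h1b' ⊢
      field_simp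
      ring
    linear_combination ((∏ m ∈ Finset.Icc 1 (j - 2), (1 - e (-α m))⁻¹) *
      ∏ m ∈ Finset.Icc j (n - 1), (1 - e (-α m))⁻¹) * scalar
  have key1G : seqRE R 1 n Gn = Gn' * (-(B 1 / (1 - B 1))) := by
    rw [hGdef, map_prod]
    rw [Finset.prod_congr rfl (g := fun m =>
        (1 - if m + 2 ≤ 1 then e (-α m) else if m + 1 = 1 then B m
          else if m = 1 then (B 1)⁻¹ else e (-α (m - 1)))⁻¹)
      (fun m hm => by
        simp only [Finset.mem_Icc] at hm
        rw [map_inv₀, map_sub, map_one, hSe 1 m (by omega) hm.1 hm.2])]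
    rw [prod_Icc_split _ (a := 1) (t := 1) (by omega) (by omega),
      Finset.Icc_self, Finset.prod_singleton,
      if_neg (show ¬(1 + 2 ≤ 1) by omega), if_neg (show ¬(1 + 1 = 1) by omega),
      if_pos (rfl : 1 = 1)]
    have hp2 : (∏ m ∈ Finset.Icc 2 n,
        (1 - if m + 2 ≤ 1 then e (-α m) else if m + 1 = 1 then B m
          else if m = 1 then (B 1)⁻¹ else e (-α (m - 1)))⁻¹)
        = ∏ m ∈ Finset.Icc 1 (n - 1), (1 - e (-α m))⁻¹ := by
      rw [Finset.prod_congr rfl (fun m hm => by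
        simp only [Finset.mem_Icc] at hm
        rw [if_neg (by omega), if_neg (by omega), if_neg (by omega)])]
      have h := prod_shift (fun x => (1 - e (-α x))⁻¹) 2 n (by omega) hn
      exact h
    rw [hp2, ← hG'def]
    have h1b := hBne1 1 le_rfl hn
    have hb0 := hBne0 1
    have hinv : (1 : K) - (B 1)⁻¹ ≠ 0 := by
      rw [sub_ne_zero]
      intro hh
      exact h1b (by simp [inv_eq_one.mp hh.symm])
    have scalar : (1 - (B 1)⁻¹)⁻¹ = -(B 1 / (1 - B 1)) := by
      rw [hBinv 1 le_rfl hn, neg_div]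
    linear_combination Gn' * scalar
  have hRnn : seqRE R n n f = R n f := by
    rw [seqRE_peel R le_rfl f, seqRE_gt R (le_refl (n + 1))]
  have hmod : ∀ k, 1 ≤ k → k ≤ n →
      modDemOp (e (-α k)) (⇑(R k)) f = e (-α k) / (1 - e (-α k)) * (f - R k f) := by
    intro k h1 h2
    have h := hαne k h1 h2
    unfold modDemOp demOp
    field_simp
    ring
  have hterm : ∀ k ∈ Finset.Ico 1 n,
      seqComp (fun k => ⇑(R k)) (k + 1) n (modDemOp (e (-α k)) (⇑(R k)) f)
        = B k / (1 - B k) * (seqRE R (k + 1) n f - seqRE R k n f) := by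
    intro k hk
    simp only [Finset.mem_Ico] at hk
    rw [hmod k hk.1 (by omega), seqComp_eq_seqRE, map_mul, map_div₀, map_sub, map_sub,
      map_one, hSe (k + 1) k (by omega) hk.1 (by omega),
      if_neg (show ¬(k + 2 ≤ k + 1) by omega), if_pos (rfl : k + 1 = k + 1),
      ← seqRE_peel R (by omega : k ≤ n) f]
  have hsplit : (∑ k ∈ Finset.Icc 1 n, B k / (1 - B k) * (seqRE R (k + 1) n f - seqRE R k n f))
      = (∑ k ∈ Finset.Ico 1 n, B k / (1 - B k) * (seqRE R (k + 1) n f - seqRE R k n f))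
        + B n / (1 - B n) * (f - R n f) := by
    rw [← Finset.Ico_add_one_right_eq_Icc, Finset.sum_Ico_succ_top hn]
    rw [seqRE_gt R (le_refl (n + 1)) f, hRnn]
  have hL : genDemOp (fun k => e (-α k)) (fun k => ⇑(R k)) 1 n f =
      (∑ k ∈ Finset.Icc 1 n, B k / (1 - B k) * (seqRE R (k + 1) n f - seqRE R k n f)) + f := by
    unfold genDemOp
    rw [Finset.sum_congr rfl hterm, hmod n hn le_rfl, hBn, hsplit]
  rw [hL]
  rw [Finset.sum_congr rfl (fun k (hk : k ∈ Finset.Icc 1 n) => by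
    rw [seqComp_eq_seqRE, map_mul] :
    ∀ k ∈ Finset.Icc 1 n, seqComp (fun k => ⇑(R k)) k n (Gn * f)
      = seqRE R k n Gn * seqRE R k n f)]
  have t1 : Gn' * ((∑ k ∈ Finset.Icc 1 n, B k / (1 - B k) * (seqRE R (k + 1) n f - seqRE R k n f)) + f)
      = (∑ k ∈ Finset.Icc 1 n, Gn' * (B k / (1 - B k)) * seqRE R (k + 1) n f)
        - (∑ k ∈ Finset.Icc 1 n, Gn' * (B k / (1 - B k)) * seqRE R k n f) + Gn' * f := by
    rw [mul_add, Finset.mul_sum, ← Finset.sum_sub_distrib]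
    congr 1
    exact Finset.sum_congr rfl fun k _ => by ring
  have t2 : (∑ k ∈ Finset.Icc 1 n, Gn' * (B k / (1 - B k)) * seqRE R (k + 1) n f)
      = (∑ k ∈ Finset.Icc 2 n, Gn' * (B (k - 1) / (1 - B (k - 1))) * seqRE R k n f)
        + Gn' * (B n / (1 - B n)) * f := by
    have h := sum_shift' (fun k => Gn' * (B (k - 1) / (1 - B (k - 1))) * seqRE R k n f) 1 n
    simp only [Nat.add_sub_cancel] at h
    rw [h, sum_Icc_split _ (a := 2) (t := n) (by omega) (by omega),
      Finset.Icc_self, Finset.sum_singleton, seqRE_gt R (le_refl (n + 1)) f]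
    simp only [Nat.add_sub_cancel]
  have t3 : (∑ k ∈ Finset.Icc 1 n, Gn' * (B k / (1 - B k)) * seqRE R k n f)
      = Gn' * (B 1 / (1 - B 1)) * seqRE R 1 n f
        + ∑ k ∈ Finset.Icc 2 n, Gn' * (B k / (1 - B k)) * seqRE R k n f := by
    rw [sum_Icc_split _ (a := 1) (t := 1) (by omega) (by omega),
      Finset.Icc_self, Finset.sum_singleton]
  have t4 : (∑ k ∈ Finset.Icc 1 n, seqRE R k n Gn * seqRE R k n f)
      = seqRE R 1 n Gn * seqRE R 1 n f
        + ∑ k ∈ Finset.Icc 2 n, seqRE R k n Gn * seqRE R k n f := by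
    rw [sum_Icc_split _ (a := 1) (t := 1) (by omega) (by omega),
      Finset.Icc_self, Finset.sum_singleton]
  have t5 : ∀ k ∈ Finset.Icc 2 n, seqRE R k n Gn * seqRE R k n f
      = Gn' * (B (k - 1) / (1 - B (k - 1))) * seqRE R k n f
        - Gn' * (B k / (1 - B k)) * seqRE R k n f := by
    intro k hk
    simp only [Finset.mem_Icc] at hk
    rw [key2G k hk.1 hk.2]
    ring
  rw [t1, t2, t3, t4, Finset.sum_congr rfl t5, Finset.sum_sub_distrib, key1G, key0]
  have h1b := hBne1 n hn le_rfl
  have hBnval : Gn' * (B n / (1 - B n)) * f + Gn' * f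
      = Gn' * ((1 - e (-α n))⁻¹) * f := by
    rw [← hBn] at h1b ⊢
    field_simp
    ring
  linear_combination hBnval
end Aux
end

section
/- For A_2, the Brion operator factorization reads: Σ_{w ∈ S_3} w ∘ (multiplication by G_1 G_2) = D_1 ∘ (r_2 d_1 + d_2 + 1), where W = S_3 is generated by r_1, r_2, D_1 = d_1 + 1 is the Demazure operator for α_1, and G_k = (1 - e^{-α_k})^{-1}. -/
section Demazure

variable {K F : Type*} [Field K] [FunLike F K K] [RingHomClass F K K]

theorem demOp_eq_mul_add_map_mul {a : K} {σ : F} (hσa : σ a = a⁻¹) (ha₀ : a ≠ 0) (ha₁ : a ≠ 1)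
    (h : K) : demOp a σ h = (1 - a)⁻¹ * h + σ ((1 - a)⁻¹ * h) := by
  have ha₁' : 1 - a ≠ 0 := sub_ne_zero.2 ha₁.symm
  rw [demOp, map_mul, map_inv₀, map_sub, map_one, hσa]
  field_simp
  ring

theorem modDemOp_add_self (a : K) (r : K → K) (f : K) : modDemOp a r f + f = demOp a r f :=
  sub_add_cancel _ _

theorem one_sub_mul_mul_inv_one_sub_mul_inv_one_sub {a b : K} (ha : a ≠ 1) (hb : b ≠ 1) :
    (1 - a * b) * ((1 - a)⁻¹ * (1 - b)⁻¹) = (1 - a)⁻¹ + (1 - b)⁻¹ - 1 := by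
  have ha' : 1 - a ≠ 0 := sub_ne_zero.2 ha.symm
  have hb' : 1 - b ≠ 0 := sub_ne_zero.2 hb.symm
  field_simp
  ring

theorem sum_weylA2_eq_demOp_comp {a b : K} {σ₁ σ₂ : F}
    (hσ₁a : σ₁ a = a⁻¹) (hσ₁b : σ₁ b = a * b) (hσ₂b : σ₂ b = b⁻¹) (hσ₂a : σ₂ a = a * b)
    (ha₀ : a ≠ 0) (hb₀ : b ≠ 0) (ha₁ : a ≠ 1) (hb₁ : b ≠ 1) (f : K) :
    let g := (1 - a)⁻¹ * ((1 - b)⁻¹ * f)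
    g + σ₁ g + σ₂ g + σ₁ (σ₂ g) + σ₂ (σ₁ g) + σ₁ (σ₂ (σ₁ g)) =
      demOp a σ₁ (σ₂ (modDemOp a σ₁ f) + modDemOp b σ₂ f + f) := by
  intro g
  have hg_def : g = (1 - a)⁻¹ * ((1 - b)⁻¹ * f) := rfl
  clear_value g
  have ha₁' : 1 - a ≠ 0 := sub_ne_zero.2 ha₁.symm
  have hb₁' : 1 - b ≠ 0 := sub_ne_zero.2 hb₁.symm
  have hσ₂ : σ₂ (1 - a * b) = 1 - a := by
    rw [map_sub, map_one, map_mul, hσ₂a, hσ₂b, mul_inv_cancel_right₀ hb₀]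
  have hσ₁ : σ₁ (1 - b) = 1 - a * b := by rw [map_sub, map_one, hσ₁b]
  have hg : (1 - a * b) * g = ((1 - a)⁻¹ + (1 - b)⁻¹ - 1) * f := by
    rw [← one_sub_mul_mul_inv_one_sub_mul_inv_one_sub ha₁ hb₁, hg_def]; ring
  have hσ₁g : (1 - a * b) * σ₁ g = σ₁ ((1 - a)⁻¹ * f) := by
    rw [← hσ₁, ← map_mul, hg_def]; congr 1; field_simp
  have hd₁ : modDemOp a σ₁ f = (1 - a * b) * (g + σ₁ g) - (1 - b)⁻¹ * f := by
    rw [modDemOp, demOp_eq_mul_add_map_mul hσ₁a ha₀ ha₁, mul_add, hg, hσ₁g]; ring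
  have inner : (1 - a) * (g + σ₂ g + σ₂ (σ₁ g)) =
      σ₂ (modDemOp a σ₁ f) + modDemOp b σ₂ f + f := by
    rw [add_assoc _ (modDemOp b σ₂ f), modDemOp_add_self,
      demOp_eq_mul_add_map_mul hσ₂b hb₀ hb₁, hd₁, map_sub, map_mul, hσ₂, map_add]
    have hg₁ : (1 - a) * g = (1 - b)⁻¹ * f := by rw [hg_def]; field_simp
    linear_combination hg₁
  rw [demOp_eq_mul_add_map_mul hσ₁a ha₀ ha₁, ← inner, ← mul_assoc, inv_mul_cancel₀ ha₁',
    one_mul, map_add, map_add]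
  ring

end Demazure

/-- For `A_2` (simple roots `α, β` with `(α, β^∨) = (β, α^∨) = -1`, Weyl group
`S_3 = {1, r_1, r_2, r_1r_2, r_2r_1, r_1r_2r_1}`), the Brion operator
factorization reads `Σ_{w ∈ S_3} w ∘ G_1 G_2 = D_1 ∘ (r_2 d_1 + d_2 + 1)`,
the right factor acting first. -/
theorem brion_factorization_A2 {P K : Type*} [AddCommGroup P] [Field K]
    (e : P → K) (he0 : e 0 = 1) (hadd : ∀ μ ν : P, e (μ + ν) = e μ * e ν)
    (hne : ∀ μ : P, μ ≠ 0 → e μ ≠ 1)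
    (α β : P)
    (hind : ∀ a b : ℤ, a • α + b • β = 0 → a = 0 ∧ b = 0)
    (ρ₁ ρ₂ : P →+ P)
    (hρ₁α : ρ₁ α = -α) (hρ₁β : ρ₁ β = α + β)
    (hρ₂β : ρ₂ β = -β) (hρ₂α : ρ₂ α = α + β)
    (r₁ r₂ : K ≃+* K)
    (hr₁ : ∀ μ : P, r₁ (e μ) = e (ρ₁ μ)) (hr₂ : ∀ μ : P, r₂ (e μ) = e (ρ₂ μ))
    (f : K) :
    (fun g : K => g + r₁ g + r₂ g + r₁ (r₂ g) + r₂ (r₁ g) + r₁ (r₂ (r₁ g)))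
        ((1 - e (-α))⁻¹ * ((1 - e (-β))⁻¹ * f)) =
      demOp (e (-α)) (⇑r₁)
        (r₂ (modDemOp (e (-α)) (⇑r₁) f) + modDemOp (e (-β)) (⇑r₂) f + f) := by
  let ψ : AddChar P K := ⟨e, he0, hadd⟩
  have he_ne_zero (μ : P) : e μ ≠ 0 := (ψ.val_isUnit μ).ne_zero
  have he_neg (μ : P) : e (-μ) = (e μ)⁻¹ := ψ.map_neg_eq_inv μ
  have hα : α ≠ 0 := fun h => one_ne_zero (hind 1 0 (by simp [h])).1
  have hβ : β ≠ 0 := fun h => one_ne_zero (hind 0 1 (by simp [h])).2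
  refine sum_weylA2_eq_demOp_comp ?_ ?_ ?_ ?_ (he_ne_zero _) (he_ne_zero _)
    (hne _ (neg_ne_zero.2 hα)) (hne _ (neg_ne_zero.2 hβ)) f
  · rw [hr₁, map_neg, hρ₁α, he_neg]
  · rw [hr₁, map_neg, hρ₁β, neg_add, hadd]
  · rw [hr₂, map_neg, hρ₂β, he_neg]
  · rw [hr₂, map_neg, hρ₂α, neg_add, hadd]
end
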